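/- Fix a face F ⪯ A and let Γ_F(M) denote, for a ℤ^d-graded S_A-module M, the submodule of the localization M[∂^{−F}] consisting of the elements annihilated by some power of the ideal of S_A generated by {t^{a_i} : a_i ∉ F}. Then for faces F′ ⪯ A: Γ_F(ℂ{ℕF′−ℕA}) = ℂ{ℕF−ℕA} if F′ = F, and Γ_F(ℂ{ℕF′−ℕA}) = 0 if F′ ≠ F. Consequently, applying Γ_F termwise to the dualizing complex ω•_{S_A} yields a complex concentrated in cohomological degree d_{A/F} with value ℂ{ℕF−ℕA}. -/

import Mathlib

/-!
Common setup: `A` is a `d × n` integer matrix, given by its columns `a : Fin n → Lat d`,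
with `ℤA = ℤ^d` (`SpansZ`) and `ℕA` pointed (`Pointed`).  Faces, semigroups, graded
modules, quasidegree sets, the dualizing complex `ω•_{S_A}` and the Ishida complexes
`℧•_F` are formalized below; all cohomology statements are expressed via the
(ℤ^d-)graded components of these complexes.
-/

namespace GKZ

open scoped Classical

noncomputable section

abbrev Lat (d : ℕ) := Fin d → ℤ
abbrev CS (d : ℕ) := Fin d → ℂ
abbrev Laur (d : ℕ) := AddMonoidAlgebra ℂ (Lat d)

/-- Inclusion ℤ^d ⊆ ℂ^d. -/
def toC {d : ℕ} (α : Lat d) : CS d := fun i => (α i : ℂ)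
/-- Inclusion ℤ^d ⊆ ℝ^d. -/
def toR {d : ℕ} (α : Lat d) : Fin d → ℝ := fun i => (α i : ℝ)
/-- The monomial t^α in the Laurent polynomial ring ℂ[ℤ^d]. -/
def mono {d : ℕ} (α : Lat d) : Laur d := AddMonoidAlgebra.single α 1

variable {d n : ℕ}

/-- The affine semigroup ℕA generated by the columns of `A`. -/
def NA (a : Fin n → Lat d) : AddSubmonoid (Lat d) := AddSubmonoid.closure (Set.range a)

/-- ℕA is pointed: ℕA ∩ (−ℕA) = {0}. -/
def Pointed (a : Fin n → Lat d) : Prop := ∀ x ∈ NA a, -x ∈ NA a → x = 0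

/-- ℤA = ℤ^d. -/
def SpansZ (a : Fin n → Lat d) : Prop :=
  AddSubgroup.closure (Set.range a) = (⊤ : AddSubgroup (Lat d))

/-- The real cone ℝ₊F spanned by the columns indexed by `F`. -/
def cone (a : Fin n → Lat d) (F : Set (Fin n)) : Set (Fin d → ℝ) :=
  { x | ∃ c : Fin n → ℝ, (∀ i, 0 ≤ c i) ∧ (∀ i, i ∉ F → c i = 0) ∧ x = ∑ i, c i • toR (a i) }

/-- `F` is a face of `A`: ℝ₊F is a face of the cone ℝ₊A, and `F` consists of all the
columns of `A` lying on that face. -/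
def IsFace (a : Fin n → Lat d) (F : Set (Fin n)) : Prop :=
  (∀ x y, x ∈ cone a Set.univ → y ∈ cone a Set.univ →
      x + y ∈ cone a F → x ∈ cone a F ∧ y ∈ cone a F) ∧
  (∀ i, toR (a i) ∈ cone a F → i ∈ F)

/-- ℕF. -/
def NFace (a : Fin n → Lat d) (F : Set (Fin n)) : AddSubmonoid (Lat d) :=
  AddSubmonoid.closure (a '' F)

/-- ℤF. -/
def ZFace (a : Fin n → Lat d) (F : Set (Fin n)) : AddSubgroup (Lat d) :=
  AddSubgroup.closure (a '' F)

/-- ℂF ⊆ ℂ^d. -/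
def CFace (a : Fin n → Lat d) (F : Set (Fin n)) : Submodule ℂ (CS d) :=
  Submodule.span ℂ (toC '' (a '' F))

/-- d_F, the rank of ℤF. -/
def dimF (a : Fin n → Lat d) (F : Set (Fin n)) : ℕ :=
  Module.finrank ℤ (Submodule.span ℤ (a '' F))

/-- σ_F, the sum of the columns of F. -/
def sigmaF (a : Fin n → Lat d) (F : Set (Fin n)) : Lat d :=
  ∑ i : Fin n, if i ∈ F then a i else 0

/-- ε_A = a_1 + ⋯ + a_n. -/
def epsA (a : Fin n → Lat d) : Lat d := ∑ i : Fin n, a i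

/-- ℕA − ℕF ⊆ ℤ^d. -/
def NAmNF (a : Fin n → Lat d) (F : Set (Fin n)) : Set (Lat d) :=
  {γ | ∃ u ∈ NA a, ∃ v ∈ NFace a F, γ = u - v}

/-- ℕF − ℕA ⊆ ℤ^d. -/
def NFmNA (a : Fin n → Lat d) (F : Set (Fin n)) : Set (Lat d) :=
  {γ | ∃ u ∈ NFace a F, ∃ v ∈ NA a, γ = u - v}

/-- ℕF − ℕH ⊆ ℤ^d. -/
def NFmNH (a : Fin n → Lat d) (F H : Set (Fin n)) : Set (Lat d) :=
  {γ | ∃ u ∈ NFace a F, ∃ v ∈ NFace a H, γ = u - v}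

/-- ℕA is normal: ℕA = ℤ^d ∩ ℝ₊A. -/
def Normal (a : Fin n → Lat d) : Prop :=
  ∀ γ : Lat d, γ ∈ NA a ↔ toR γ ∈ cone a Set.univ

/-- The Zariski closure of a subset of ℂ^d. -/
def zClosure {d : ℕ} (T : Set (CS d)) : Set (CS d) :=
  {x | ∀ p : MvPolynomial (Fin d) ℂ, (∀ y ∈ T, MvPolynomial.eval y p = 0) →
    MvPolynomial.eval x p = 0}

def IsZClosed {d : ℕ} (Z : Set (CS d)) : Prop := zClosure Z ⊆ Z

/-- Irreducibility of a subset of ℂ^d in the Zariski topology. -/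
def ZIrred {d : ℕ} (Z : Set (CS d)) : Prop :=
  Z.Nonempty ∧ ∀ C₁ C₂ : Set (CS d), IsZClosed C₁ → IsZClosed C₂ →
    Z ⊆ C₁ ∪ C₂ → Z ⊆ C₁ ∨ Z ⊆ C₂

/-- Krull (topological) dimension of a subset of ℂ^d with the Zariski topology:
the Krull dimension of the poset of irreducible Zariski-closed subsets contained in it. -/
def zdim {d : ℕ} (Z : Set (CS d)) : WithBot ℕ∞ :=
  Order.krullDim {C : Set (CS d) // C ⊆ Z ∧ IsZClosed C ∧ ZIrred C}

/-- `Z` is an irreducible component of `W`: a maximal irreducible Zariski-closed subset. -/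
def IsIrredComp {d : ℕ} (Z W : Set (CS d)) : Prop :=
  Z ⊆ W ∧ IsZClosed Z ∧ ZIrred Z ∧
    ∀ Z' : Set (CS d), IsZClosed Z' → ZIrred Z' → Z ⊆ Z' → Z' ⊆ W → Z' = Z

/-- The type of faces of `A`. -/
def FaceT (a : Fin n → Lat d) := {G : Set (Fin n) // IsFace a G}

instance (a : Fin n → Lat d) : Finite (FaceT a) := by
  unfold FaceT; infer_instance

noncomputable instance (a : Fin n → Lat d) : Fintype (FaceT a) := Fintype.ofFinite _

/-- Degree set of the localization M[∂^{−G}] of the monomial module with degree set `E`: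
the set E − ℕG. -/
def locE (a : Fin n → Lat d) (E : Set (Lat d)) (G : Set (Fin n)) : Set (Lat d) :=
  {γ | ∃ f ∈ NFace a G, γ + f ∈ E}

/-- Functions supported on a subset, as a ℂ-submodule of the function space. -/
def funSupported {ι : Type*} (S : Set ι) : Submodule ℂ (ι → ℂ) where
  carrier := {c | ∀ i, i ∉ S → c i = 0}
  add_mem' := by
    intro x y hx hy i hi
    simp only [Set.mem_setOf_eq] at hx hy
    simp [Pi.add_apply, hx i hi, hy i hi]
  zero_mem' := by intro i _; rfl
  smul_mem' := by
    intro r x hx i hi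
    simp only [Set.mem_setOf_eq] at hx
    simp [Pi.smul_apply, hx i hi]

/-- The degree-γ part of the term of the Ishida complex ℧•_F(M) (base face `F`, monomial
module with degree set `E`) whose summands are indexed by the faces of absolute dimension
`j` (cohomological degree `j − d_F`): functions on the faces `G ⊇ F` with `d_G = j` and
`γ ∈ E − ℕG`. -/
def ishChain (a : Fin n → Lat d) (E : Set (Lat d)) (F : Set (Fin n)) (j : ℤ) (γ : Lat d) :
    Submodule ℂ (FaceT a → ℂ) :=
  funSupported {G : FaceT a | F ⊆ G.1 ∧ (dimF a G.1 : ℤ) = j ∧ γ ∈ locE a E G.1}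

/-- The differential of the Ishida complex (in each ℤ^d-degree): the component from a face
`G'` into a face `G''` covering it is `ε G' G''` times the natural localization map. -/
def ishDelta (a : Fin n → Lat d) (ε : Set (Fin n) → Set (Fin n) → ℂ) :
    (FaceT a → ℂ) →ₗ[ℂ] (FaceT a → ℂ) where
  toFun c := fun G'' => ∑ G' : FaceT a,
    if G'.1 ⊆ G''.1 ∧ dimF a G''.1 = dimF a G'.1 + 1 then ε G'.1 G''.1 * c G' else 0
  map_add' x y := by
    funext G''
    simp only [Pi.add_apply, ← Finset.sum_add_distrib]
    refine Finset.sum_congr rfl fun G' _ => ?_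
    by_cases h : G'.1 ⊆ G''.1 ∧ dimF a G''.1 = dimF a G'.1 + 1
    · simp [h, mul_add]
    · simp [h]
  map_smul' r x := by
    funext G''
    simp only [Pi.smul_apply, smul_eq_mul, RingHom.id_apply, Finset.mul_sum]
    refine Finset.sum_congr rfl fun G' _ => ?_
    by_cases h : G'.1 ⊆ G''.1 ∧ dimF a G''.1 = dimF a G'.1 + 1
    · simp only [h, and_self, if_true]; ring
    · simp [h]

/-- Degree-γ cocycles of the Ishida complex at absolute dimension `j`. -/
def ishZ (a : Fin n → Lat d) (E : Set (Lat d)) (ε : Set (Fin n) → Set (Fin n) → ℂ)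
    (F : Set (Fin n)) (j : ℤ) (γ : Lat d) : Submodule ℂ (FaceT a → ℂ) :=
  ishChain a E F j γ ⊓ LinearMap.ker (ishDelta a ε)

/-- Degree-γ coboundaries of the Ishida complex at absolute dimension `j`. -/
def ishB (a : Fin n → Lat d) (E : Set (Lat d)) (ε : Set (Fin n) → Set (Fin n) → ℂ)
    (F : Set (Fin n)) (j : ℤ) (γ : Lat d) : Submodule ℂ (FaceT a → ℂ) :=
  Submodule.map (ishDelta a ε) (ishChain a E F (j - 1) γ)

/-- The degree-γ component of the cohomology of the Ishida complex ℧•_F(M) at absolute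
dimension `j` (cohomological degree `j − d_F`). -/
abbrev ishH (a : Fin n → Lat d) (E : Set (Lat d)) (ε : Set (Fin n) → Set (Fin n) → ℂ)
    (F : Set (Fin n)) (j : ℤ) (γ : Lat d) :=
  ↥(ishZ a E ε F j γ) ⧸
    Submodule.comap (ishZ a E ε F j γ).subtype (ishB a E ε F j γ)

/-- Nonvanishing of the degree-γ component of the cohomology of the Ishida complex. -/
def ishHne (a : Fin n → Lat d) (E : Set (Lat d)) (ε : Set (Fin n) → Set (Fin n) → ℂ)
    (F : Set (Fin n)) (j : ℤ) (γ : Lat d) : Prop :=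
  ¬ (ishZ a E ε F j γ ≤ ishB a E ε F j γ)

/-- Degree-γ part of the term of ω•_{S_A} in cohomological degree `i`:
functions on the faces `G` with `d_{A/G} = i` and `γ ∈ ℕG − ℕA`. -/
def omChain (a : Fin n → Lat d) (i : ℤ) (γ : Lat d) : Submodule ℂ (FaceT a → ℂ) :=
  funSupported {G : FaceT a | (dimF a G.1 : ℤ) = (d : ℤ) - i ∧ γ ∈ NFmNA a G.1}

/-- Degree-γ part of the differential of ω•_{S_A}: the component from a face `G'` to a face
`G''` covered by it is `ε G' G''` times the natural projection ℂ{ℕG'−ℕA} → ℂ{ℕG''−ℕA}. -/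
def omDelta (a : Fin n → Lat d) (ε : Set (Fin n) → Set (Fin n) → ℂ) (γ : Lat d) :
    (FaceT a → ℂ) →ₗ[ℂ] (FaceT a → ℂ) where
  toFun c := fun G'' =>
    if γ ∈ NFmNA a G''.1 then
      ∑ G' : FaceT a,
        if G''.1 ⊆ G'.1 ∧ dimF a G'.1 = dimF a G''.1 + 1 then ε G'.1 G''.1 * c G' else 0
    else 0
  map_add' x y := by
    funext G''
    by_cases hγ : γ ∈ NFmNA a G''.1
    · simp only [Pi.add_apply, hγ, if_true, ← Finset.sum_add_distrib]
      refine Finset.sum_congr rfl fun G' _ => ?_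
      by_cases h : G''.1 ⊆ G'.1 ∧ dimF a G'.1 = dimF a G''.1 + 1
      · simp [h, mul_add]
      · simp [h]
    · simp [hγ]
  map_smul' r x := by
    funext G''
    by_cases hγ : γ ∈ NFmNA a G''.1
    · simp only [Pi.smul_apply, smul_eq_mul, RingHom.id_apply, hγ, if_true, Finset.mul_sum]
      refine Finset.sum_congr rfl fun G' _ => ?_
      by_cases h : G''.1 ⊆ G'.1 ∧ dimF a G'.1 = dimF a G''.1 + 1
      · simp only [h, and_self, if_true]; ring
      · simp [h]
    · simp [hγ]

/-- Degree-γ cocycles of ω•_{S_A} in cohomological degree `i`. -/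
def omZ (a : Fin n → Lat d) (ε : Set (Fin n) → Set (Fin n) → ℂ) (i : ℤ) (γ : Lat d) :
    Submodule ℂ (FaceT a → ℂ) :=
  omChain a i γ ⊓ LinearMap.ker (omDelta a ε γ)

/-- Degree-γ coboundaries of ω•_{S_A} in cohomological degree `i`. -/
def omB (a : Fin n → Lat d) (ε : Set (Fin n) → Set (Fin n) → ℂ) (i : ℤ) (γ : Lat d) :
    Submodule ℂ (FaceT a → ℂ) :=
  Submodule.map (omDelta a ε γ) (omChain a (i - 1) γ)

/-- Nonvanishing of H^i(ω•_{S_A})_γ. -/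
def omHne (a : Fin n → Lat d) (ε : Set (Fin n) → Set (Fin n) → ℂ) (i : ℤ) (γ : Lat d) : Prop :=
  ¬ (omZ a ε i γ ≤ omB a ε i γ)

/-- A ℤ^d-graded S_A-module, presented by its grading together with the (degree-shifting)
action of the monomials t^u, u ∈ ℕA. -/
structure GradedSAMod (a : Fin n → Lat d) (M : Type) [AddCommGroup M] [Module ℂ M] where
  decomp : Lat d → Submodule ℂ M
  internal : DirectSum.IsInternal decomp
  act : (u : Lat d) → u ∈ NA a → (M →ₗ[ℂ] M)
  act_zero : ∀ h0 : (0 : Lat d) ∈ NA a, act 0 h0 = LinearMap.id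
  act_add : ∀ (u : Lat d) (hu : u ∈ NA a) (v : Lat d) (hv : v ∈ NA a) (huv : u + v ∈ NA a),
    act (u + v) huv = (act u hu).comp (act v hv)
  act_grade : ∀ (u : Lat d) (hu : u ∈ NA a) (γ : Lat d), ∀ m ∈ decomp γ,
    act u hu m ∈ decomp (γ + u)

/-- Finite generation over S_A. -/
def GradedSAMod.FGmod {a : Fin n → Lat d} {M : Type} [AddCommGroup M] [Module ℂ M]
    (g : GradedSAMod a M) : Prop :=
  ∃ S : Finset M, ∀ m : M,
    m ∈ Submodule.span ℂ {x | ∃ u, ∃ hu : u ∈ NA a, ∃ s ∈ S, x = g.act u hu s}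

/-- Degrees of nonzero homogeneous elements of `M` that survive in the localization
`M[∂^{−H}]` (i.e. are killed by no power of t^{σ_H}). -/
def GradedSAMod.survTdeg {a : Fin n → Lat d} {M : Type} [AddCommGroup M] [Module ℂ M]
    (g : GradedSAMod a M) (H : Set (Fin n)) : Set (Lat d) :=
  {γ | ∃ m ∈ g.decomp γ, m ≠ 0 ∧ ∀ (k : ℕ) (hk : k • sigmaF a H ∈ NA a), g.act _ hk m ≠ 0}

/-- The quasidegree set of the localization `M[∂^{−H}]` of a finitely generated graded
module `M`: the union over `k` of the Zariski closures of the true degree sets of the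
finitely generated graded submodules t^{−kσ_H}·M of the localization. -/
def GradedSAMod.qdegLoc {a : Fin n → Lat d} {M : Type} [AddCommGroup M] [Module ℂ M]
    (g : GradedSAMod a M) (H : Set (Fin n)) : Set (CS d) :=
  ⋃ k : ℕ, zClosure (toC '' {γ : Lat d | γ + k • sigmaF a H ∈ g.survTdeg H})

/-- A ℂ-submodule is graded: it is spanned by its homogeneous elements. -/
def IsGradedSubC {d : ℕ} {M : Type} [AddCommGroup M] [Module ℂ M]
    (decomp : Lat d → Submodule ℂ M) (N : Submodule ℂ M) : Prop :=
  N = Submodule.span ℂ ((N : Set M) ∩ ⋃ γ : Lat d, (decomp γ : Set M))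

/-- A ℂ-submodule is an S_A-submodule: stable under the monomial action. -/
def IsStableSub {a : Fin n → Lat d} {M : Type} [AddCommGroup M] [Module ℂ M]
    (g : GradedSAMod a M) (N : Submodule ℂ M) : Prop :=
  ∀ (u : Lat d) (hu : u ∈ NA a), ∀ m ∈ N, g.act u hu m ∈ N

/-- The semigroup ring S_A = ℂ[ℕA] as a subalgebra of ℂ[ℤ^d]. -/
def SAlg (a : Fin n → Lat d) : Subalgebra ℂ (Laur d) :=
  Algebra.adjoin ℂ {x | ∃ α ∈ NA a, x = mono α}

/-- The monomial t^u, u ∈ ℕA, as an element of S_A. -/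
def smono (a : Fin n → Lat d) (u : Lat d) (hu : u ∈ NA a) : ↥(SAlg a) :=
  ⟨mono u, Algebra.subset_adjoin ⟨u, hu, rfl⟩⟩

/-- The underlying ℂ-vector space of the monomial module ℂ{E}: finitely supported
functions on `E`. -/
abbrev wMod (d : ℕ) (E : Set (Lat d)) := ↥(Finsupp.supported ℂ ℂ E)

/-- The action of the monomial t^w on ℂ{E}: shift the degree by `w`, truncate back to `E`. -/
def wAct {d : ℕ} (E : Set (Lat d)) (w : Lat d) : wMod d E →ₗ[ℂ] wMod d E :=
  (Finsupp.restrictDom ℂ ℂ E).comp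
    ((Finsupp.lmapDomain ℂ ℂ (fun γ => γ + w)).comp (Finsupp.supported ℂ ℂ E).subtype)

/-- The elements annihilated by some power of the ideal generated by the t^{a_i}, i ∉ F. -/
def torsionAt (a : Fin n → Lat d) (F : Set (Fin n)) {ML : Type} [AddCommGroup ML]
    [Module ℂ ML] (TL : (u : Lat d) → u ∈ NA a → (ML →ₗ[ℂ] ML)) : Set ML :=
  {y | ∃ k : ℕ, ∀ f : Fin k → Fin n, (∀ j, f j ∉ F) →
    ∀ h : (∑ j, a (f j)) ∈ NA a, TL (∑ j, a (f j)) h y = 0}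

/-- The toric ideal I_A ⊆ R_A = ℂ[∂_1,…,∂_n]. -/
def toricIdeal (a : Fin n → Lat d) : Ideal (MvPolynomial (Fin n) ℂ) :=
  RingHom.ker (MvPolynomial.aeval (fun i => mono (a i)) : MvPolynomial (Fin n) ℂ →ₐ[ℂ] Laur d)

/-- The ideal I_F^A = I_A + ⟨∂_i : a_i ∉ F⟩ of R_A. -/
def IFA (a : Fin n → Lat d) (F : Set (Fin n)) : Ideal (MvPolynomial (Fin n) ℂ) :=
  toricIdeal a ⊔ Ideal.span {p | ∃ i, i ∉ F ∧ p = MvPolynomial.X i}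

/-- An R_A-submodule is graded: it is spanned by its homogeneous elements. -/
def IsGradedSubR {d n : ℕ} {M : Type} [AddCommGroup M] [Module ℂ M]
    [Module (MvPolynomial (Fin n) ℂ) M]
    (decomp : Lat d → Submodule ℂ M) (N : Submodule (MvPolynomial (Fin n) ℂ) M) : Prop :=
  N = Submodule.span (MvPolynomial (Fin n) ℂ) ((N : Set M) ∩ ⋃ γ : Lat d, (decomp γ : Set M))

/-- `h` is the primitive integral support function of the facet `G`. -/
def IsPISF (a : Fin n → Lat d) (G : Set (Fin n)) (h : Lat d →ₗ[ℤ] ℤ) : Prop :=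
  (∃ x, h x = 1) ∧ (∀ i, 0 ≤ h (a i)) ∧ (∀ i, h (a i) = 0 ↔ i ∈ G)

/-- The ℂ-linear extension of an integral linear form to ℂ^d. -/
def hC {d : ℕ} (h : Lat d →ₗ[ℤ] ℤ) (β : CS d) : ℂ :=
  ∑ j : Fin d, β j * ((h (Pi.single j 1) : ℤ) : ℂ)

/-!
A face `F` is exposed by a linear form vanishing on `F` and `≥ 1` on the other columns
(Hahn–Banach, separating the simplex on the columns off `F` from the span of `F`). Such a form
for a face `G` is `≤ 0` on ℕG − ℕA, so a monomial on which it is large kills any given element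
of ℂ{ℕG − ℕA}. For ℂ{ℕF′ − ℕA}: if `F ⊄ F'`, the form exposing `F'` is positive on σ_F, so
powers of t^{σ_F} kill everything and the localization vanishes; if `F ⊊ F'`, both t^{σ_F} and
t^{a_i} for `a_i ∈ F' \ F` act injectively, so there is no torsion; if `F' = F`, inverting
t^{σ_F} changes nothing, while products of enough columns off `F` kill every element.
-/

section Cone

open scoped Pointwise

variable {a : Fin n → Lat d} {F : Set (Fin n)}

def colComb (a : Fin n → Lat d) : (Fin n → ℝ) →ₗ[ℝ] (Fin d → ℝ) :=
  Fintype.linearCombination ℝ fun i => toR (a i)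

lemma mem_cone_iff {x : Fin d → ℝ} :
    x ∈ cone a F ↔ ∃ c : Fin n → ℝ, (∀ i, 0 ≤ c i) ∧ (∀ i ∉ F, c i = 0) ∧ colComb a c = x := by
  simp only [cone, colComb, Fintype.linearCombination_apply, Set.mem_ofPred_eq, eq_comm]

lemma colComb_mem_cone {c : Fin n → ℝ} (h0 : ∀ i, 0 ≤ c i) (hF : ∀ i ∉ F, c i = 0) :
    colComb a c ∈ cone a F :=
  mem_cone_iff.2 ⟨c, h0, hF, rfl⟩

lemma colComb_mem_cone_univ {c : Fin n → ℝ} (h0 : ∀ i, 0 ≤ c i) :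
    colComb a c ∈ cone a Set.univ :=
  colComb_mem_cone h0 fun i hi => (hi (Set.mem_univ i)).elim

lemma colComb_single (i : Fin n) (t : ℝ) : colComb a (Pi.single i t) = t • toR (a i) :=
  Fintype.linearCombination_apply_single ℝ _ i t

lemma toR_mem_cone {i : Fin n} (hi : i ∈ F) : toR (a i) ∈ cone a F := by
  rw [← one_smul ℝ (toR (a i)), ← colComb_single]
  refine colComb_mem_cone (fun j => ?_) fun j hj => ?_
  · by_cases h : j = i <;> simp [h]
  · simp [show j ≠ i by rintro rfl; exact hj hi]

lemma smul_mem_cone {x : Fin d → ℝ} {t : ℝ} (ht : 0 ≤ t) (hx : x ∈ cone a F) :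
    t • x ∈ cone a F := by
  obtain ⟨c, h0, hF, rfl⟩ := mem_cone_iff.1 hx
  rw [← map_smul]
  exact colComb_mem_cone (fun i => mul_nonneg ht (h0 i)) fun i hi => by simp [hF i hi]

lemma IsFace.mem_of_colComb_mem_cone (hF : IsFace a F) {c : Fin n → ℝ} (h0 : ∀ i, 0 ≤ c i)
    (hc : colComb a c ∈ cone a F) {i : Fin n} (hi : 0 < c i) : i ∈ F := by
  set c' := c - Pi.single i (c i)
  have hsplit : colComb a c = c i • toR (a i) + colComb a c' := by
    rw [map_sub, colComb_single, add_sub_cancel]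
  have hc' : ∀ j, 0 ≤ c' j := fun j => by
    by_cases h : j = i
    · subst h; simp [c']
    · simp [c', h, h0 j]
  have hface := (hF.1 _ _ (smul_mem_cone hi.le (toR_mem_cone (Set.mem_univ i)))
    (colComb_mem_cone_univ hc') (hsplit ▸ hc)).1
  refine hF.2 i ?_
  simpa [smul_smul, inv_mul_cancel₀ hi.ne'] using smul_mem_cone (inv_nonneg.2 hi.le) hface

lemma IsFace.colComb_add_ne_zero (hF : IsFace a F) {c v : Fin n → ℝ}
    (hc : c ∈ stdSimplex ℝ (Fin n)) (hcF : ∀ i ∈ F, c i = 0) (hv : ∀ i ∉ F, v i = 0) :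
    colComb a c + colComb a v ≠ 0 := by
  intro h
  have hsum : colComb a c + colComb a v⁺ = colComb a v⁻ := by
    rw [← posPart_sub_negPart v, map_sub] at h
    rw [← sub_eq_zero, ← h]; abel
  have hneg : colComb a v⁻ ∈ cone a F :=
    colComb_mem_cone (negPart_nonneg v) fun i hi => by simp [Pi.negPart_apply, hv i hi]
  have hcone : colComb a c ∈ cone a F :=
    (hF.1 _ _ (colComb_mem_cone_univ hc.1) (colComb_mem_cone_univ (posPart_nonneg v))
      (hsum ▸ hneg)).1
  obtain ⟨i, -, hi⟩ := Finset.exists_ne_zero_of_sum_ne_zero (hc.2.symm ▸ one_ne_zero)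
  exact hi (hcF i (hF.mem_of_colComb_mem_cone hc.1 hcone ((hc.1 i).lt_of_ne' hi)))

theorem IsFace.exists_supporting_functional (hF : IsFace a F) :
    ∃ f : (Fin d → ℝ) →ₗ[ℝ] ℝ, (∀ i ∈ F, f (toR (a i)) = 0) ∧ ∀ i ∉ F, 1 ≤ f (toR (a i)) := by
  by_cases hall : ∀ i, i ∈ F
  · exact ⟨0, fun _ _ => rfl, fun i hi => (hi (hall i)).elim⟩
  obtain ⟨i₀, hi₀⟩ := not_forall.1 hall
  let V : Submodule ℝ (Fin n → ℝ) := Submodule.pi F fun _ => ⊥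
  let W : Submodule ℝ (Fin d → ℝ) := (Submodule.pi Fᶜ fun _ => ⊥).map (colComb a)
  let T : Set (Fin n → ℝ) := stdSimplex ℝ (Fin n) ∩ V
  let S : Set (Fin d → ℝ) := colComb a '' T + (W : Set (Fin d → ℝ))
  have hsingle : ∀ i ∉ F, colComb a (Pi.single i 1) ∈ colComb a '' T := fun i hi =>
    ⟨_, ⟨single_mem_stdSimplex ℝ i, fun j hj => by
      simp [show j ≠ i by rintro rfl; exact hi hj]⟩, rfl⟩
  have hW : ∀ i ∈ F, toR (a i) ∈ W := fun i hi =>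
    ⟨Pi.single i 1, fun j hj => by simp [show j ≠ i by rintro rfl; exact hj hi],
      by rw [colComb_single, one_smul]⟩
  have hT : IsCompact T := (isCompact_stdSimplex ℝ _).inter_right V.closed_of_finiteDimensional
  have hS_closed : IsClosed S :=
    W.closed_of_finiteDimensional.add_left_of_isCompact
      (hT.image (colComb a).continuous_of_finiteDimensional)
  have hS_convex : Convex ℝ S :=
    (((convex_stdSimplex ℝ _).inter V.convex).linear_image _).add W.convex
  have h0 : (0 : Fin d → ℝ) ∉ S := by
    rintro ⟨_, ⟨c, hc, rfl⟩, _, ⟨v, hv, rfl⟩, h⟩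
    exact hF.colComb_add_ne_zero hc.1 (by simpa [V] using hc.2) (by simpa using hv) h
  obtain ⟨f, u, hu, hfS⟩ := geometric_hahn_banach_point_closed hS_convex hS_closed h0
  rw [map_zero] at hu
  -- `f > u` on each line `k + ℝ • w` inside `S`, which forces `f w = 0`
  have hfW : ∀ w ∈ W, f w = 0 := by
    intro w hw
    by_contra hfw
    set k := colComb a (Pi.single i₀ 1)
    have := hfS _ (Set.add_mem_add (hsingle i₀ hi₀) (W.smul_mem ((u - f k) / f w) hw))
    rw [map_add, map_smul, smul_eq_mul, div_mul_cancel₀ _ hfw] at this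
    linarith
  refine ⟨u⁻¹ • (f : (Fin d → ℝ) →ₗ[ℝ] ℝ), fun i hi => by simp [hfW _ (hW i hi)], fun i hi => ?_⟩
  have hfi := hfS _ (Set.add_mem_add (hsingle i hi) W.zero_mem)
  rw [add_zero, colComb_single, one_smul] at hfi
  simpa using (le_inv_mul_iff₀ hu).2 (by linarith)

end Cone

section Semigroup

variable {a : Fin n → Lat d} {F G : Set (Fin n)}

def latForm (f : (Fin d → ℝ) →ₗ[ℝ] ℝ) : Lat d →+ ℝ :=
  f.toAddMonoidHom.comp ((Int.castAddHom ℝ).compLeft (Fin d))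

lemma latForm_apply (f : (Fin d → ℝ) →ₗ[ℝ] ℝ) (γ : Lat d) : latForm f γ = f (toR γ) := rfl

lemma col_mem_NFace {i : Fin n} (hi : i ∈ G) : a i ∈ NFace a G :=
  AddSubmonoid.subset_closure ⟨i, hi, rfl⟩

lemma sigmaF_mem_NFace (h : F ⊆ G) : sigmaF a F ∈ NFace a G :=
  AddSubmonoid.sum_mem _ fun i _ => by
    split_ifs with hi
    exacts [col_mem_NFace (h hi), zero_mem _]

lemma add_mem_NFmNA {γ u : Lat d} (hγ : γ ∈ NFmNA a G) (hu : u ∈ NFace a G) :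
    γ + u ∈ NFmNA a G := by
  obtain ⟨v, hv, w, hw, rfl⟩ := hγ
  exact ⟨v + u, add_mem hv hu, w, hw, by abel⟩

lemma mem_NFmNA_of_add_mem {γ u : Lat d} (hu : u ∈ NA a) (h : γ + u ∈ NFmNA a G) :
    γ ∈ NFmNA a G := by
  obtain ⟨v, hv, w, hw, hvw⟩ := h
  exact ⟨v, hv, w + u, add_mem hw hu, by rw [← sub_sub, ← hvw, add_sub_cancel_right]⟩

lemma latForm_nonpos_of_mem_NFmNA {f : (Fin d → ℝ) →ₗ[ℝ] ℝ}
    (hf0 : ∀ i ∈ G, f (toR (a i)) = 0) (hnn : ∀ i, 0 ≤ f (toR (a i))) {γ : Lat d}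
    (hγ : γ ∈ NFmNA a G) : latForm f γ ≤ 0 := by
  obtain ⟨v, hv, w, hw, rfl⟩ := hγ
  have hv0 : latForm f v = 0 := by
    induction hv using AddSubmonoid.closure_induction with
    | mem x hx => obtain ⟨i, hi, rfl⟩ := hx; exact hf0 i hi
    | zero => exact map_zero _
    | add x y _ _ hx hy => rw [map_add, hx, hy, add_zero]
  have hw0 : 0 ≤ latForm f w := by
    induction hw using AddSubmonoid.closure_induction with
    | mem x hx => obtain ⟨i, rfl⟩ := hx; exact hnn i
    | zero => exact (map_zero _).ge
    | add x y _ _ hx hy => rw [map_add]; exact add_nonneg hx hy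
  rw [map_sub, hv0, zero_sub, neg_nonpos]
  exact hw0

end Semigroup

section MonomialModule

variable {E : Set (Lat d)}

lemma wAct_apply (w : Lat d) (x : wMod d E) (δ : Lat d) :
    (wAct E w x : Lat d →₀ ℂ) δ = if δ ∈ E then (x : Lat d →₀ ℂ) (δ - w) else 0 := by
  change Finsupp.filter (· ∈ E) (Finsupp.mapDomain (· + w) (x : Lat d →₀ ℂ)) δ = _
  rw [Finsupp.filter_apply]
  split_ifs
  · conv_lhs => rw [← sub_add_cancel δ w]
    exact Finsupp.mapDomain_apply (add_left_injective w) _ _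
  · rfl

lemma wAct_eq_zero {w : Lat d} {x : wMod d E}
    (h : ∀ γ ∈ (x : Lat d →₀ ℂ).support, γ + w ∉ E) : wAct E w x = 0 := by
  ext δ
  rw [wAct_apply]
  split_ifs with hδ
  · by_contra hne
    exact h _ (Finsupp.mem_support_iff.2 hne) (by rwa [sub_add_cancel])
  · rfl

lemma wAct_injective {w : Lat d} (h : ∀ γ ∈ E, γ + w ∈ E) : Function.Injective (wAct E w) := by
  refine (injective_iff_map_eq_zero _).2 fun x hx => ?_
  ext γ
  by_cases hγ : γ ∈ E
  · simpa [wAct_apply, h γ hγ] using congrArg (fun z : wMod d E => (z : Lat d →₀ ℂ) (γ + w)) hx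
  · exact Finsupp.notMem_support_iff.1 fun hmem => hγ (x.2 hmem)

lemma wAct_surjective {w : Lat d} (h : ∀ γ, γ + w ∈ E → γ ∈ E) :
    Function.Surjective (wAct E w) := by
  refine fun x => ⟨wAct E (-w) x, ?_⟩
  ext δ
  simp only [wAct_apply, sub_neg_eq_add, sub_add_cancel]
  split_ifs with hδ hδw
  · rfl
  · exact (hδw (h _ (by rwa [sub_add_cancel]))).elim
  · exact (Finsupp.notMem_support_iff.1 fun hmem => hδ (x.2 hmem)).symm

lemma exists_nat_forall_wAct_NFmNA_eq_zero {a : Fin n → Lat d} {G : Set (Fin n)}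
    {f : (Fin d → ℝ) →ₗ[ℝ] ℝ} (hf0 : ∀ i ∈ G, f (toR (a i)) = 0)
    (hnn : ∀ i, 0 ≤ f (toR (a i))) (x : wMod d (NFmNA a G)) :
    ∃ m : ℕ, ∀ w, (m : ℝ) ≤ latForm f w → wAct (NFmNA a G) w x = 0 := by
  obtain ⟨m, hm⟩ := exists_nat_gt (∑ γ ∈ (x : Lat d →₀ ℂ).support, |latForm f γ|)
  refine ⟨m, fun w hw => wAct_eq_zero fun γ hγ hmem => ?_⟩
  have hneg := latForm_nonpos_of_mem_NFmNA hf0 hnn hmem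
  have hle : |latForm f γ| ≤ ∑ γ ∈ (x : Lat d →₀ ℂ).support, |latForm f γ| :=
    Finset.single_le_sum (f := fun γ => |latForm f γ|) (fun _ _ => abs_nonneg _) hγ
  rw [map_add] at hneg
  linarith [neg_abs_le (latForm f γ)]

end MonomialModule

lemma act_congr {a : Fin n → Lat d} {ML : Type} [AddCommGroup ML] [Module ℂ ML]
    (TL : (u : Lat d) → u ∈ NA a → (ML →ₗ[ℂ] ML)) {u v : Lat d} (h : u = v) (hu : u ∈ NA a)
    (hv : v ∈ NA a) : TL u hu = TL v hv := by
  subst h; rfl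

/-- `ML`, with the action `TL` of the monomials t^u (u ∈ ℕA) and the map `ι`, is a localization
of ℂ{E} at t^σ. -/
structure IsMonomialLocalization (a : Fin n → Lat d) (E : Set (Lat d)) (σ : Lat d) {ML : Type}
    [AddCommGroup ML] [Module ℂ ML] (TL : (u : Lat d) → u ∈ NA a → (ML →ₗ[ℂ] ML))
    (ι : wMod d E →ₗ[ℂ] ML) : Prop where
  act_zero : ∀ h0 : (0 : Lat d) ∈ NA a, TL 0 h0 = LinearMap.id
  act_add : ∀ (u : Lat d) (hu : u ∈ NA a) (v : Lat d) (hv : v ∈ NA a) (huv : u + v ∈ NA a),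
    TL (u + v) huv = (TL u hu).comp (TL v hv)
  act_comp_iota : ∀ (u : Lat d) (hu : u ∈ NA a), (TL u hu).comp ι = ι.comp (wAct E u)
  mem : σ ∈ NA a
  act_injective : Function.Injective (TL σ mem)
  exists_act_eq_iota : ∀ y : ML, ∃ (k : ℕ) (hk : k • σ ∈ NA a) (x : wMod d E),
    TL (k • σ) hk y = ι x
  iota_eq_zero_iff : ∀ x : wMod d E,
    ι x = 0 ↔ ∃ (k : ℕ) (_ : k • σ ∈ NA a), wAct E (k • σ) x = 0

namespace IsMonomialLocalization

variable {a : Fin n → Lat d} {E : Set (Lat d)} {σ : Lat d} {ML : Type} [AddCommGroup ML]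
  [Module ℂ ML] {TL : (u : Lat d) → u ∈ NA a → (ML →ₗ[ℂ] ML)} {ι : wMod d E →ₗ[ℂ] ML}

lemma act_iota (hL : IsMonomialLocalization a E σ TL ι) {u : Lat d} (hu : u ∈ NA a)
    (x : wMod d E) : TL u hu (ι x) = ι (wAct E u x) :=
  LinearMap.congr_fun (hL.act_comp_iota u hu) x

lemma act_act_comm (hL : IsMonomialLocalization a E σ TL ι) {u v : Lat d} (hu : u ∈ NA a)
    (hv : v ∈ NA a) (y : ML) : TL u hu (TL v hv y) = TL v hv (TL u hu y) := by
  rw [← LinearMap.comp_apply, ← hL.act_add u hu v hv (add_mem hu hv), ← LinearMap.comp_apply,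
    ← hL.act_add v hv u hu (add_mem hv hu), act_congr TL (add_comm u v)]

lemma act_nsmul_injective (hL : IsMonomialLocalization a E σ TL ι) (k : ℕ)
    (hk : k • σ ∈ NA a) : Function.Injective (TL (k • σ) hk) := by
  induction k with
  | zero =>
    rw [act_congr TL (zero_smul ℕ σ) hk (zero_mem _), hL.act_zero]
    exact Function.injective_id
  | succ k ih =>
    rw [act_congr TL (succ_nsmul σ k) hk (add_mem (nsmul_mem hL.mem k) hL.mem),
      hL.act_add _ (nsmul_mem hL.mem k) _ hL.mem, LinearMap.coe_comp]
    exact (ih _).comp hL.act_injective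

lemma iota_injective (hL : IsMonomialLocalization a E σ TL ι)
    (hE : ∀ k : ℕ, ∀ γ ∈ E, γ + k • σ ∈ E) : Function.Injective ι := by
  refine (injective_iff_map_eq_zero ι).2 fun x hx => ?_
  obtain ⟨k, -, hk⟩ := (hL.iota_eq_zero_iff x).1 hx
  exact (injective_iff_map_eq_zero _).1 (wAct_injective (hE k)) x hk

lemma iota_surjective (hL : IsMonomialLocalization a E σ TL ι)
    (hE : ∀ k : ℕ, ∀ γ, γ + k • σ ∈ E → γ ∈ E) : Function.Surjective ι := by
  intro y
  obtain ⟨k, hk, x, hx⟩ := hL.exists_act_eq_iota y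
  obtain ⟨x', rfl⟩ := wAct_surjective (hE k) x
  exact ⟨x', hL.act_nsmul_injective k hk (by rw [hL.act_iota, hx])⟩

lemma eq_zero_of_forall_exists_wAct_eq_zero (hL : IsMonomialLocalization a E σ TL ι)
    (h : ∀ x, ∃ k : ℕ, wAct E (k • σ) x = 0) (y : ML) : y = 0 := by
  obtain ⟨k, hk, x, hx⟩ := hL.exists_act_eq_iota y
  obtain ⟨m, hm⟩ := h x
  refine hL.act_nsmul_injective k hk ?_
  rw [hx, map_zero, (hL.iota_eq_zero_iff x).2 ⟨m, nsmul_mem hL.mem m, hm⟩]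

lemma eq_zero_of_act_eq_zero (hL : IsMonomialLocalization a E σ TL ι)
    (hι : Function.Injective ι) {w : Lat d} (hw : w ∈ NA a)
    (hwE : Function.Injective (wAct E w)) {y : ML} (hy : TL w hw y = 0) : y = 0 := by
  obtain ⟨k, hk, x, hx⟩ := hL.exists_act_eq_iota y
  have hwx : ι (wAct E w x) = 0 := by
    rw [← hL.act_iota hw, ← hx, hL.act_act_comm, hy, map_zero]
  have hx0 : x = 0 := (injective_iff_map_eq_zero _).1 hwE x <|
    (injective_iff_map_eq_zero _).1 hι _ hwx
  refine hL.act_nsmul_injective k hk ?_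
  rw [hx, hx0, map_zero, map_zero]

end IsMonomialLocalization

lemma nonneg_of_supporting {a : Fin n → Lat d} {F : Set (Fin n)} {f : (Fin d → ℝ) →ₗ[ℝ] ℝ}
    (hf0 : ∀ i ∈ F, f (toR (a i)) = 0) (hf1 : ∀ i ∉ F, 1 ≤ f (toR (a i))) (i : Fin n) :
    0 ≤ f (toR (a i)) := by
  by_cases hi : i ∈ F
  exacts [(hf0 i hi).ge, zero_le_one.trans (hf1 i hi)]

namespace IsMonomialLocalization

variable {a : Fin n → Lat d} {F G : Set (Fin n)} {ML : Type} [AddCommGroup ML] [Module ℂ ML]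
  {TL : (u : Lat d) → u ∈ NA a → (ML →ₗ[ℂ] ML)} {ι : wMod d (NFmNA a G) →ₗ[ℂ] ML}

lemma iota_injective_of_subset (hL : IsMonomialLocalization a (NFmNA a G) (sigmaF a F) TL ι)
    (h : F ⊆ G) : Function.Injective ι :=
  hL.iota_injective fun k _ hγ => add_mem_NFmNA hγ (nsmul_mem (sigmaF_mem_NFace h) k)

lemma iota_bijective_self {ι : wMod d (NFmNA a F) →ₗ[ℂ] ML}
    (hL : IsMonomialLocalization a (NFmNA a F) (sigmaF a F) TL ι) : Function.Bijective ι :=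
  ⟨hL.iota_injective_of_subset subset_rfl,
    hL.iota_surjective fun k _ => mem_NFmNA_of_add_mem (nsmul_mem hL.mem k)⟩

lemma mem_torsionAt {ι : wMod d (NFmNA a F) →ₗ[ℂ] ML}
    (hL : IsMonomialLocalization a (NFmNA a F) (sigmaF a F) TL ι) (hF : IsFace a F) (y : ML) :
    y ∈ torsionAt a F TL := by
  obtain ⟨f, hf0, hf1⟩ := hF.exists_supporting_functional
  obtain ⟨x, rfl⟩ := hL.iota_bijective_self.2 y
  obtain ⟨m, hm⟩ := exists_nat_forall_wAct_NFmNA_eq_zero hf0 (nonneg_of_supporting hf0 hf1) x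
  refine ⟨m, fun g hg hw => ?_⟩
  rw [hL.act_iota, hm, map_zero]
  simpa using Finset.card_nsmul_le_sum Finset.univ (fun j => latForm f (a (g j))) 1
    fun j _ => hf1 _ (hg j)

lemma eq_zero_of_mem_torsionAt_of_ssubset
    (hL : IsMonomialLocalization a (NFmNA a G) (sigmaF a F) TL ι) (h : F ⊂ G) {y : ML}
    (hy : y ∈ torsionAt a F TL) : y = 0 := by
  obtain ⟨i, hiG, hiF⟩ := Set.exists_of_ssubset h
  obtain ⟨k, hk⟩ := hy
  have hw : ∑ _j : Fin k, a i ∈ NA a :=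
    AddSubmonoid.sum_mem _ fun _ _ => AddSubmonoid.subset_closure ⟨i, rfl⟩
  refine hL.eq_zero_of_act_eq_zero (hL.iota_injective_of_subset h.subset) hw
    (wAct_injective fun γ hγ => add_mem_NFmNA hγ ?_) (hk (fun _ => i) (fun _ => hiF) hw)
  exact AddSubmonoid.sum_mem _ fun _ _ => col_mem_NFace hiG

lemma eq_zero_of_not_subset (hL : IsMonomialLocalization a (NFmNA a G) (sigmaF a F) TL ι)
    (hG : IsFace a G) (h : ¬ F ⊆ G) (y : ML) : y = 0 := by
  obtain ⟨i, hiF, hiG⟩ := Set.not_subset.1 h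
  obtain ⟨f, hf0, hf1⟩ := hG.exists_supporting_functional
  have hnn := nonneg_of_supporting hf0 hf1
  have hσ : 1 ≤ latForm f (sigmaF a F) := by
    rw [sigmaF, map_sum]
    refine le_trans ?_ (Finset.single_le_sum (fun j _ => ?_) (Finset.mem_univ i))
    · simpa [hiF, latForm_apply] using hf1 i hiG
    · split_ifs
      exacts [hnn j, (map_zero _).ge]
  refine hL.eq_zero_of_forall_exists_wAct_eq_zero (fun x => ?_) y
  obtain ⟨m, hm⟩ := exists_nat_forall_wAct_NFmNA_eq_zero hf0 hnn x
  refine ⟨m, hm _ ?_⟩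
  rw [map_nsmul, nsmul_eq_mul]
  exact le_mul_of_one_le_right m.cast_nonneg hσ

end IsMonomialLocalization

theorem gammaF_of_omega_terms_general
    {d n : ℕ} (a : Fin n → Lat d)
    (F F' : Set (Fin n)) (hF : IsFace a F) (hF' : IsFace a F')
    (ML : Type) [AddCommGroup ML] [Module ℂ ML]
    (TL : (u : Lat d) → u ∈ NA a → (ML →ₗ[ℂ] ML))
    (hTzero : ∀ h0 : (0 : Lat d) ∈ NA a, TL 0 h0 = LinearMap.id)
    (hTadd : ∀ (u : Lat d) (hu : u ∈ NA a) (v : Lat d) (hv : v ∈ NA a)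
      (huv : u + v ∈ NA a), TL (u + v) huv = (TL u hu).comp (TL v hv))
    (ι : wMod d (NFmNA a F') →ₗ[ℂ] ML)
    (hcomm : ∀ (u : Lat d) (hu : u ∈ NA a),
      (TL u hu).comp ι = ι.comp (wAct (NFmNA a F') u))
    (hσ : sigmaF a F ∈ NA a)
    (hbij : Function.Bijective (TL (sigmaF a F) hσ))
    (hsurj : ∀ y : ML, ∃ (k : ℕ) (hk : k • sigmaF a F ∈ NA a) (x : wMod d (NFmNA a F')),
      TL (k • sigmaF a F) hk y = ι x)
    (hker : ∀ x : wMod d (NFmNA a F'), ι x = 0 ↔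
      ∃ (k : ℕ) (_ : k • sigmaF a F ∈ NA a), wAct (NFmNA a F') (k • sigmaF a F) x = 0) :
    (F' = F → Function.Bijective ι ∧ ∀ y : ML, y ∈ torsionAt a F TL) ∧
    (F' ≠ F → ∀ y ∈ torsionAt a F TL, y = 0) ∧
    (∀ i : ℤ, i ≠ (d : ℤ) - (dimF a F : ℤ) → (dimF a F' : ℤ) = (d : ℤ) - i →
      ∀ y ∈ torsionAt a F TL, y = 0) := by
  have hL : IsMonomialLocalization a (NFmNA a F') (sigmaF a F) TL ι :=
    ⟨hTzero, hTadd, hcomm, hσ, hbij.injective, hsurj, hker⟩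
  have hvanish : F' ≠ F → ∀ y ∈ torsionAt a F TL, y = 0 := fun hne y hy => by
    by_cases hsub : F ⊆ F'
    · exact hL.eq_zero_of_mem_torsionAt_of_ssubset (hsub.ssubset_of_ne hne.symm) hy
    · exact hL.eq_zero_of_not_subset hF' hsub y
  refine ⟨fun h => ?_, hvanish, fun i hi hdim => hvanish fun h => hi ?_⟩
  · subst h
    exact ⟨hL.iota_bijective_self, hL.mem_torsionAt hF⟩
  · rw [h] at hdim
    omega

/-- Fix a face `F ⪯ A` and let Γ_F(M) be the submodule of the
localization M[∂^{−F}] of elements annihilated by a power of the ideal generated by the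
t^{a_i}, a_i ∉ F.  For faces `F' ⪯ A` and the module ℂ{ℕF′−ℕA} (with localization
`(ML, ι)` at t^{σ_F}, axiomatized by its defining properties):
Γ_F(ℂ{ℕF′−ℕA}) = ℂ{ℕF−ℕA} if F′ = F (the localization map is bijective and everything is
torsion), and Γ_F(ℂ{ℕF′−ℕA}) = 0 if F′ ≠ F.  Consequently applying Γ_F termwise to
ω•_{S_A} yields a complex concentrated in cohomological degree d_{A/F} with value
ℂ{ℕF−ℕA}. -/
theorem gammaF_of_omega_terms
    {d n : ℕ} (hd : 0 < d) (hn : 0 < n) (a : Fin n → Lat d)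
    (hZA : SpansZ a) (hPt : Pointed a)
    (F F' : Set (Fin n)) (hF : IsFace a F) (hF' : IsFace a F')
    (ML : Type) [AddCommGroup ML] [Module ℂ ML]
    (TL : (u : Lat d) → u ∈ NA a → (ML →ₗ[ℂ] ML))
    (hTzero : ∀ h0 : (0 : Lat d) ∈ NA a, TL 0 h0 = LinearMap.id)
    (hTadd : ∀ (u : Lat d) (hu : u ∈ NA a) (v : Lat d) (hv : v ∈ NA a)
      (huv : u + v ∈ NA a), TL (u + v) huv = (TL u hu).comp (TL v hv))
    (ι : wMod d (NFmNA a F') →ₗ[ℂ] ML)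
    (hcomm : ∀ (u : Lat d) (hu : u ∈ NA a),
      (TL u hu).comp ι = ι.comp (wAct (NFmNA a F') u))
    (hσ : sigmaF a F ∈ NA a)
    (hbij : Function.Bijective (TL (sigmaF a F) hσ))
    (hsurj : ∀ y : ML, ∃ (k : ℕ) (hk : k • sigmaF a F ∈ NA a) (x : wMod d (NFmNA a F')),
      TL (k • sigmaF a F) hk y = ι x)
    (hker : ∀ x : wMod d (NFmNA a F'), ι x = 0 ↔
      ∃ (k : ℕ) (_ : k • sigmaF a F ∈ NA a), wAct (NFmNA a F') (k • sigmaF a F) x = 0) :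
    (F' = F → Function.Bijective ι ∧ ∀ y : ML, y ∈ torsionAt a F TL) ∧
    (F' ≠ F → ∀ y ∈ torsionAt a F TL, y = 0) ∧
    (∀ i : ℤ, i ≠ (d : ℤ) - (dimF a F : ℤ) → (dimF a F' : ℤ) = (d : ℤ) - i →
      ∀ y ∈ torsionAt a F TL, y = 0) :=
  gammaF_of_omega_terms_general a F F' hF hF' ML TL hTzero hTadd ι hcomm hσ hbij hsurj hker

end

end GKZ
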